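/- arXiv:2211.11245 — 4 statements merged into one kernel-verified Lean document; each statement's English description precedes it below -/
import Mathlib

section
/- Let a ≥ 0 and let φ : ℝ → ℝ be 1-periodic, continuous, positive, and satisfy φ(x) ≤ e^{a|x−y|}·φ(y) for all x, y ∈ ℝ. Then Pφ satisfies (Pφ)(x) ≤ e^{(a/2)|x−y|}·(Pφ)(y) for all x, y ∈ ℝ; that is, the transfer operator of the doubling map maps the cone V_a into the cone V_{a/2}. -/
/-- The transfer operator of the doubling map acting on 1-periodic functions. -/
noncomputable def Pop (ψ : ℝ → ℝ) : ℝ → ℝ :=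
  fun x => (1/2) * ψ (x/2) + (1/2) * ψ ((x+1)/2)

/-- Each inverse branch `x ↦ (x + t) / 2` of the doubling map halves distances. -/
theorem le_exp_half_mul_abs_of_inverse_branch {a : ℝ} {φ : ℝ → ℝ}
    (hcone : ∀ x y, φ x ≤ Real.exp (a * |x - y|) * φ y) (t x y : ℝ) :
    φ ((x + t) / 2) ≤ Real.exp ((a / 2) * |x - y|) * φ ((y + t) / 2) := by
  have hdist : a * |(x + t) / 2 - (y + t) / 2| = (a / 2) * |x - y| := by
    rw [show (x + t) / 2 - (y + t) / 2 = (x - y) / 2 by ring, abs_div, abs_two]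
    ring
  simpa only [hdist] using hcone ((x + t) / 2) ((y + t) / 2)

theorem stmt1_general (a : ℝ) (φ : ℝ → ℝ)
    (hcone : ∀ x y, φ x ≤ Real.exp (a * |x - y|) * φ y) :
    ∀ x y, Pop φ x ≤ Real.exp ((a / 2) * |x - y|) * Pop φ y := by
  intro x y
  have hleft : φ (x / 2) ≤ Real.exp ((a / 2) * |x - y|) * φ (y / 2) := by
    simpa only [add_zero] using le_exp_half_mul_abs_of_inverse_branch hcone 0 x y
  have hright := le_exp_half_mul_abs_of_inverse_branch hcone 1 x y
  simp only [Pop]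
  linarith

/-- The transfer operator of the doubling map sends the cone `V_a` of positive, continuous,
1-periodic functions with `φ x ≤ e^{a|x-y|} φ y` into the cone `V_{a/2}`. -/
theorem stmt1 (a : ℝ) (ha : 0 ≤ a) (φ : ℝ → ℝ)
    (hper : ∀ x, φ (x + 1) = φ x) (hcont : Continuous φ) (hpos : ∀ x, 0 < φ x)
    (hcone : ∀ x y, φ x ≤ Real.exp (a * |x - y|) * φ y) :
    ∀ x y, Pop φ x ≤ Real.exp ((a / 2) * |x - y|) * Pop φ y :=
  stmt1_general a φ hcone
end

section
/- There exist ε₀ > 0 and C ≥ 0, depending only on h, such that for every ε with |ε| ≤ ε₀, every L ≥ 0, and every φ ∈ B_L: the map g_{ε,φ} is a strictly increasing bijection of ℝ, and the function L_{ε,φ}φ := (φ / g_{ε,φ}') ∘ g_{ε,φ}^{-1} is Lipschitz with Lipschitz constant at most (1 + C|ε|)·(L + C|ε|). -/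
open MeasureTheory

/-- The coupled map `g_{ε,φ}(x) = x + ε ∫₀¹ h(x,y) φ(y) dy`. -/
noncomputable def gmap (h : ℝ → ℝ → ℝ) (ε : ℝ) (φ : ℝ → ℝ) : ℝ → ℝ :=
  fun x => x + ε * ∫ y in (0:ℝ)..1, h x y * φ y

/-- The transfer operator of `g_{ε,φ}` applied to `u`: `(u / g') ∘ g⁻¹`. -/
noncomputable def Lop (h : ℝ → ℝ → ℝ) (ε : ℝ) (φ u : ℝ → ℝ) : ℝ → ℝ :=
  fun x => u (Function.invFun (gmap h ε φ) x) /
    deriv (gmap h ε φ) (Function.invFun (gmap h ε φ) x)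

/-- `h` is 1-periodic in each variable. -/
def periodicH (h : ℝ → ℝ → ℝ) : Prop :=
  (∀ x y, h (x+1) y = h x y) ∧ (∀ x y, h x (y+1) = h x y)

/-- `B_L`: 1-periodic, nonnegative, `L`-Lipschitz densities with `∫₀¹ φ = 1`. -/
def memB (L : ℝ) (φ : ℝ → ℝ) : Prop :=
  (∀ x, φ (x+1) = φ x) ∧ (∀ x, 0 ≤ φ x) ∧
  (∀ x y, |φ x - φ y| ≤ L * |x - y|) ∧ (∫ x in (0:ℝ)..1, φ x) = 1

/-! Write `g = gmap h ε φ = id + ε ψ` with `ψ x = ∫₀¹ h(x, y) φ(y) dy`. Differentiating under the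
integral, `ψ`, `ψ'` and `ψ''` are bounded by the sup norms of `h`, `∂ₓh` and `∂ₓ²h`, which are finite
by continuity and periodicity, uniformly over all densities `φ`. So `g' = 1 + ε ψ'` is within `c/2`
of `1` and `(c/4)`-Lipschitz with `c = O(|ε|)`: `g` is an increasing bijection whose inverse is
`(1 + c)`-Lipschitz. At preimages `a, b` the quotient rule gives
`|φ a / g' a - φ b / g' b| ≤ |φ a - φ b| / g' a + φ b |g' a - g' b| / (g' a g' b)`, and the last term
is controlled because `∫₀¹ φ = 1` together with periodicity and the Lipschitz bound forces
`φ ≤ 1 + L`. -/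

open Function Set

theorem Function.Periodic.map_fract {α : Type*} {f : ℝ → α} (hf : Periodic f 1) (x : ℝ) :
    f (Int.fract x) = f x := by
  simpa [Int.self_sub_floor] using hf.sub_int_mul_eq (x := x) ⌊x⌋

noncomputable def derivFst (k : ℝ → ℝ → ℝ) : ℝ → ℝ → ℝ :=
  fun x y => deriv (k · y) x

noncomputable def integralAgainst (k : ℝ → ℝ → ℝ) (φ : ℝ → ℝ) : ℝ → ℝ :=
  fun x => ∫ y in (0:ℝ)..1, k x y * φ y

section PartialDerivative

variable {k : ℝ → ℝ → ℝ}

theorem hasDerivAt_fderiv_uncurry_apply (hk : Differentiable ℝ (uncurry k)) (x y : ℝ) :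
    HasDerivAt (k · y) (fderiv ℝ (uncurry k) (x, y) (1, 0)) x :=
  (hk (x, y)).hasFDerivAt.comp_hasDerivAt (f := fun t => (t, y)) x
    ((hasDerivAt_id' x).prodMk (hasDerivAt_const x y))

theorem hasDerivAt_derivFst (hk : Differentiable ℝ (uncurry k)) (x y : ℝ) :
    HasDerivAt (k · y) (derivFst k x y) x :=
  (hasDerivAt_fderiv_uncurry_apply hk x y).differentiableAt.hasDerivAt

theorem ContDiff.uncurry_derivFst {n : WithTop ℕ∞} (hk : ContDiff ℝ (n + 1) (uncurry k)) :
    ContDiff ℝ n (uncurry (derivFst k)) := by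
  have hdiff : Differentiable ℝ (uncurry k) := hk.differentiable (by simp)
  have : uncurry (derivFst k) = fun p => fderiv ℝ (uncurry k) p (1, 0) := by
    ext ⟨x, y⟩
    exact (hasDerivAt_fderiv_uncurry_apply hdiff x y).deriv
  rw [this]
  exact (hk.fderiv_right le_rfl).clm_apply contDiff_const

theorem periodicH.derivFst (hk : periodicH k) : periodicH (derivFst k) := by
  refine ⟨fun x y => ?_, fun x y => ?_⟩
  · simp only [_root_.derivFst, ← deriv_comp_add_const, hk.1]
  · simp only [_root_.derivFst, hk.2]

theorem periodicH.exists_abs_le (hk : periodicH k) (hc : Continuous (uncurry k)) :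
    ∃ M ≥ 0, ∀ x y, |k x y| ≤ M := by
  obtain ⟨M, hM⟩ := (isCompact_Icc.prod isCompact_Icc).exists_bound_of_continuousOn
    (s := Icc (0:ℝ) 1 ×ˢ Icc (0:ℝ) 1) hc.continuousOn
  refine ⟨M, (norm_nonneg _).trans (hM (0, 0) ⟨by simp, by simp⟩), fun x y => ?_⟩
  have hfract : k (Int.fract x) (Int.fract y) = k x y := by
    rw [Periodic.map_fract (f := (k · (Int.fract y))) (hk.1 · _), Periodic.map_fract (hk.2 x)]
  rw [← hfract]
  exact hM (Int.fract x, Int.fract y)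
    ⟨⟨Int.fract_nonneg x, (Int.fract_lt_one x).le⟩, ⟨Int.fract_nonneg y, (Int.fract_lt_one y).le⟩⟩

end PartialDerivative

section IntegralAgainst

variable {φ : ℝ → ℝ}

theorem abs_integral_mul_le_of_abs_le {f : ℝ → ℝ} {M : ℝ} (hf : Continuous f)
    (hφ : Continuous φ) (hφ0 : ∀ y, 0 ≤ φ y) (hφ1 : ∫ y in (0:ℝ)..1, φ y = 1)
    (hM : ∀ y, |f y| ≤ M) : |∫ y in (0:ℝ)..1, f y * φ y| ≤ M :=
  calc |∫ y in (0:ℝ)..1, f y * φ y|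
      ≤ ∫ y in (0:ℝ)..1, |f y * φ y| := intervalIntegral.abs_integral_le_integral_abs zero_le_one
    _ ≤ ∫ y in (0:ℝ)..1, M * φ y := by
        refine intervalIntegral.integral_mono_on zero_le_one
          ((hf.mul hφ).abs.intervalIntegrable _ _) ((hφ.const_mul M).intervalIntegrable _ _)
          fun y _ => ?_
        rw [abs_mul, abs_of_nonneg (hφ0 y)]
        exact mul_le_mul_of_nonneg_right (hM y) (hφ0 y)
    _ = M := by rw [intervalIntegral.integral_const_mul, hφ1, mul_one]

theorem hasDerivAt_integralAgainst {k : ℝ → ℝ → ℝ} {M : ℝ} (hk : ContDiff ℝ 1 (uncurry k))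
    (hM : ∀ x y, |derivFst k x y| ≤ M) (hφ : Continuous φ) (x : ℝ) :
    HasDerivAt (integralAgainst k φ) (integralAgainst (derivFst k) φ x) x := by
  have hkc : ∀ x, Continuous (k x) := fun x => hk.continuous.uncurry_left x
  have hk'c : ∀ x, Continuous (derivFst k x) :=
    fun x => (ContDiff.uncurry_derivFst (n := 0) (by simpa using hk)).continuous.uncurry_left x
  refine (intervalIntegral.hasDerivAt_integral_of_dominated_loc_of_deriv_le
    (bound := fun y => M * |φ y|) (s := univ) Filter.univ_mem
    (Filter.Eventually.of_forall fun x => ((hkc x).mul hφ).aestronglyMeasurable)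
    (((hkc x).mul hφ).intervalIntegrable _ _) ((hk'c x).mul hφ).aestronglyMeasurable
    (Filter.Eventually.of_forall fun y _ x _ => ?_)
    ((hφ.abs.const_mul M).intervalIntegrable _ _)
    (Filter.Eventually.of_forall fun y _ x _ =>
      (hasDerivAt_derivFst (hk.differentiable one_ne_zero) x y).mul_const (φ y))).2
  rw [Real.norm_eq_abs, abs_mul]
  exact mul_le_mul_of_nonneg_right (hM x y) (abs_nonneg _)

end IntegralAgainst

section Density

variable {L : ℝ} {φ : ℝ → ℝ}

theorem memB.continuous (hφ : memB L φ) : Continuous φ :=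
  (LipschitzWith.of_dist_le_mul fun x y => by
    rw [Real.dist_eq, Real.dist_eq, Real.coe_toNNReal']
    exact (hφ.2.2.1 x y).trans (mul_le_mul_of_nonneg_right (le_max_left _ _) (abs_nonneg _))
    ).continuous

theorem memB.le_one_add (hφ : memB L φ) (hL : 0 ≤ L) (x : ℝ) : φ x ≤ 1 + L := by
  have hφc := hφ.continuous
  obtain ⟨hper, -, hlip, hint⟩ := hφ
  obtain ⟨x₀, hx₀, hmin⟩ := isCompact_Icc.exists_isMinOn (nonempty_Icc.2 zero_le_one)
    hφc.continuousOn
  have hx₀le : φ x₀ ≤ 1 := by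
    have : ∫ _ in (0:ℝ)..1, φ x₀ ≤ ∫ y in (0:ℝ)..1, φ y :=
      intervalIntegral.integral_mono_on zero_le_one intervalIntegrable_const
        (hφc.intervalIntegrable 0 1) fun y hy => isMinOn_iff.1 hmin y hy
    simpa [hint] using this
  have hdist : |Int.fract x - x₀| ≤ 1 := by
    rw [abs_le]
    constructor <;> linarith [Int.fract_nonneg x, Int.fract_lt_one x, hx₀.1, hx₀.2]
  rw [← Periodic.map_fract hper]
  linarith [(abs_le.1 (hlip (Int.fract x) x₀)).2, mul_le_of_le_one_right hL hdist]

theorem memB.abs_integralAgainst_le {k : ℝ → ℝ → ℝ} {M : ℝ} (hφ : memB L φ)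
    (hk : Continuous (uncurry k)) (hM : ∀ x y, |k x y| ≤ M) (x : ℝ) :
    |integralAgainst k φ x| ≤ M :=
  abs_integral_mul_le_of_abs_le (hk.uncurry_left x) hφ.continuous hφ.2.1 hφ.2.2.2 (hM x)

end Density

section RealLine

variable {g g' : ℝ → ℝ}

theorem abs_sub_le_of_abs_deriv_le {M : ℝ} (hg : ∀ x, HasDerivAt g (g' x) x)
    (hM : ∀ x, |g' x| ≤ M) (x y : ℝ) : |g x - g y| ≤ M * |x - y| :=
  convex_univ.norm_image_sub_le_of_norm_hasDerivWithin_le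
    (fun x _ => (hg x).hasDerivWithinAt) (fun x _ => hM x) (mem_univ y) (mem_univ x)

theorem mul_abs_sub_le_of_le_deriv {m : ℝ} (hg : ∀ x, HasDerivAt g (g' x) x)
    (hm : ∀ x, m ≤ g' x) (a b : ℝ) : m * |a - b| ≤ |g a - g b| := by
  wlog hab : b ≤ a generalizing a b
  · rw [abs_sub_comm, abs_sub_comm (g a)]
    exact this b a (le_of_not_ge hab)
  rw [abs_of_nonneg (sub_nonneg.2 hab)]
  refine (mul_sub_le_image_sub_of_le_deriv (fun x => (hg x).differentiableAt)
    (fun x => (hg x).deriv ▸ hm x) hab).trans (le_abs_self _)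

theorem surjective_of_abs_sub_le {c : ℝ} (hg : Continuous g) (hc : ∀ x, |g x - x| ≤ c) :
    Surjective g := by
  intro z
  have hlow := (abs_le.1 (hc (z - c))).2
  have hhigh := (abs_le.1 (hc (z + c))).1
  obtain ⟨w, -, hw⟩ := intermediate_value_Icc (by linarith [abs_nonneg (g z - z), hc z])
    hg.continuousOn (⟨by linarith, by linarith⟩ : z ∈ Icc (g (z - c)) (g (z + c)))
  exact ⟨w, hw⟩

theorem abs_div_sub_div_le {p q u v : ℝ} (hu : 0 < u) (hv : 0 < v) :
    |p / u - q / v| ≤ |p - q| / u + |q| * |u - v| / (u * v) := by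
  have hsplit : p / u - q / v = (p - q) / u + q * (v - u) / (u * v) := by
    field_simp
    ring
  rw [hsplit, abs_sub_comm u v, ← abs_mul]
  calc _ ≤ |(p - q) / u| + |q * (v - u) / (u * v)| := abs_add_le _ _
    _ = _ := by rw [abs_div, abs_div, abs_of_pos hu, abs_of_pos (mul_pos hu hv)]

end RealLine

theorem abs_div_deriv_sub_div_deriv_le {g g' φ : ℝ → ℝ} {c L : ℝ} (hc : c ≤ 1) (hL : 0 ≤ L)
    (hg : ∀ x, HasDerivAt g (g' x) x) (hg'1 : ∀ x, |g' x - 1| ≤ c / 2)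
    (hg'lip : ∀ x y, |g' x - g' y| ≤ c / 4 * |x - y|)
    (hφ0 : ∀ x, 0 ≤ φ x) (hφ1 : ∀ x, φ x ≤ 1 + L) (hφlip : ∀ x y, |φ x - φ y| ≤ L * |x - y|)
    (a b : ℝ) :
    |φ a / g' a - φ b / g' b| ≤ (1 + 5 * c) * (L + 5 * c) * |g a - g b| := by
  have hc0 : 0 ≤ c := by linarith [abs_nonneg (g' 0 - 1), hg'1 0]
  have hlow : ∀ x, 1 - c / 2 ≤ g' x := fun x => by linarith [(abs_le.1 (hg'1 x)).1]
  have hu := hlow a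
  have hv := hlow b
  have hgrowth : 1 ≤ (1 + c) * (1 - c / 2) := by nlinarith
  have hd : |a - b| ≤ (1 + c) * |g a - g b| := by
    nlinarith [mul_le_mul_of_nonneg_left (mul_abs_sub_le_of_le_deriv hg hlow a b)
      (by linarith : 0 ≤ 1 + c), abs_nonneg (a - b)]
  have hfirst : |φ a - φ b| / g' a ≤ L * (1 + c) * |a - b| := by
    rw [div_le_iff₀ (by linarith)]
    have hLd := mul_nonneg hL (abs_nonneg (a - b))
    nlinarith [hφlip a b, mul_nonneg (mul_nonneg hLd (by linarith : 0 ≤ 1 + c)) (sub_nonneg.2 hu)]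
  have hsecond : |φ b| * |g' a - g' b| / (g' a * g' b) ≤ (1 + L) * c * |a - b| := by
    rw [div_le_iff₀ (by nlinarith), abs_of_nonneg (hφ0 b)]
    have huv : 1 / 4 ≤ g' a * g' b := by nlinarith
    calc φ b * |g' a - g' b| ≤ (1 + L) * (c / 4 * |a - b|) :=
          mul_le_mul (hφ1 b) (hg'lip a b) (abs_nonneg _) (by linarith)
      _ ≤ (1 + L) * c * |a - b| * (g' a * g' b) := by
          nlinarith [mul_nonneg (mul_nonneg (by linarith : 0 ≤ 1 + L) hc0) (abs_nonneg (a - b))]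
  calc |φ a / g' a - φ b / g' b|
      ≤ |φ a - φ b| / g' a + |φ b| * |g' a - g' b| / (g' a * g' b) :=
        abs_div_sub_div_le (by linarith) (by linarith)
    _ ≤ (L * (1 + 2 * c) + c) * |a - b| := by linarith
    _ ≤ (L * (1 + 2 * c) + c) * ((1 + c) * |g a - g b|) := by gcongr
    _ ≤ (1 + 5 * c) * (L + 5 * c) * |g a - g b| := by
        rw [← mul_assoc]
        refine mul_le_mul_of_nonneg_right ?_ (abs_nonneg _)
        nlinarith [mul_nonneg hL hc0, mul_nonneg (mul_nonneg hL hc0) (sub_nonneg.2 hc)]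

theorem strictMono_bijective_and_transfer_lipschitz {g ψ ψ' φ : ℝ → ℝ} {ε M₀ M₁ M₂ L : ℝ}
    (hg : ∀ x, g x = x + ε * ψ x) (hψ : ∀ x, HasDerivAt ψ (ψ' x) x)
    (hM₀ : ∀ x, |ψ x| ≤ M₀) (hM₁ : ∀ x, |ψ' x| ≤ M₁)
    (hM₂ : ∀ x y, |ψ' x - ψ' y| ≤ M₂ * |x - y|) (hε : (2 * M₁ + 4 * M₂) * |ε| ≤ 1)
    (hL : 0 ≤ L) (hφ0 : ∀ x, 0 ≤ φ x) (hφ1 : ∀ x, φ x ≤ 1 + L)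
    (hφlip : ∀ x y, |φ x - φ y| ≤ L * |x - y|) :
    StrictMono g ∧ Bijective g ∧ ∀ x y,
      |φ (invFun g x) / deriv g (invFun g x) - φ (invFun g y) / deriv g (invFun g y)| ≤
        (1 + 5 * (2 * M₁ + 4 * M₂) * |ε|) * (L + 5 * (2 * M₁ + 4 * M₂) * |ε|) * |x - y| := by
  obtain rfl : g = fun x => x + ε * ψ x := funext hg
  have hM₁0 : 0 ≤ M₁ := (abs_nonneg _).trans (hM₁ 0)
  have hM₂0 : 0 ≤ M₂ := by simpa using (abs_nonneg _).trans (hM₂ 1 0)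
  have hg' : ∀ x, HasDerivAt (fun x => x + ε * ψ x) (1 + ε * ψ' x) x :=
    fun x => (hasDerivAt_id x).add ((hψ x).const_mul ε)
  have hg'1 : ∀ x, |1 + ε * ψ' x - 1| ≤ (2 * M₁ + 4 * M₂) * |ε| / 2 := fun x => by
    rw [add_sub_cancel_left, abs_mul]
    nlinarith [mul_le_mul_of_nonneg_left (hM₁ x) (abs_nonneg ε), mul_nonneg hM₂0 (abs_nonneg ε)]
  have hg'lip : ∀ x y, |1 + ε * ψ' x - (1 + ε * ψ' y)| ≤ (2 * M₁ + 4 * M₂) * |ε| / 4 * |x - y| :=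
    fun x y => by
      rw [add_sub_add_left_eq_sub, ← mul_sub, abs_mul]
      nlinarith [mul_le_mul_of_nonneg_left (hM₂ x y) (abs_nonneg ε),
        mul_nonneg (mul_nonneg hM₁0 (abs_nonneg ε)) (abs_nonneg (x - y))]
  have hmono : StrictMono fun x => x + ε * ψ x := strictMono_of_deriv_pos fun x => by
    rw [(hg' x).deriv]
    linarith [(abs_le.1 (hg'1 x)).1]
  have hsurj : Surjective fun x => x + ε * ψ x :=
    surjective_of_abs_sub_le (c := |ε| * M₀)
      (continuous_iff_continuousAt.2 fun x => (hg' x).continuousAt) fun x => by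
        rw [add_sub_cancel_left, abs_mul]
        exact mul_le_mul_of_nonneg_left (hM₀ x) (abs_nonneg ε)
  refine ⟨hmono, ⟨hmono.injective, hsurj⟩, fun x y => ?_⟩
  obtain ⟨a, rfl⟩ := hsurj x
  obtain ⟨b, rfl⟩ := hsurj y
  rw [leftInverse_invFun hmono.injective a, leftInverse_invFun hmono.injective b, (hg' a).deriv,
    (hg' b).deriv]
  exact (abs_div_deriv_sub_div_deriv_le hε hL hg' hg'1 hg'lip hφ0 hφ1 hφlip a b).trans_eq
    (by ring)

/-- For small `ε`, `g_{ε,φ}` is a strictly increasing bijection of `ℝ` and the transferred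
density `L_{ε,φ}φ` is Lipschitz with constant `(1 + C|ε|)(L + C|ε|)`. -/
theorem stmt2 (h : ℝ → ℝ → ℝ) (hC2 : ContDiff ℝ 2 (Function.uncurry h))
    (hper : periodicH h) :
    ∃ ε₀ > (0:ℝ), ∃ C ≥ (0:ℝ), ∀ ε : ℝ, |ε| ≤ ε₀ → ∀ L : ℝ, 0 ≤ L → ∀ φ : ℝ → ℝ, memB L φ →
      StrictMono (gmap h ε φ) ∧ Function.Bijective (gmap h ε φ) ∧
      ∀ x y, |Lop h ε φ φ x - Lop h ε φ φ y| ≤ (1 + C * |ε|) * (L + C * |ε|) * |x - y| := by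
  have hC1 : ContDiff ℝ 1 (uncurry (derivFst h)) := hC2.uncurry_derivFst
  have hC0 : Continuous (uncurry (derivFst (derivFst h))) :=
    (hC1.uncurry_derivFst (n := 0)).continuous
  obtain ⟨M₀, -, hM₀⟩ := hper.exists_abs_le hC2.continuous
  obtain ⟨M₁, hM₁0, hM₁⟩ := hper.derivFst.exists_abs_le hC1.continuous
  obtain ⟨M₂, hM₂0, hM₂⟩ := hper.derivFst.derivFst.exists_abs_le hC0
  refine ⟨1 / (2 * M₁ + 4 * M₂ + 1), by positivity, 5 * (2 * M₁ + 4 * M₂), by positivity,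
    fun ε hε L hL φ hφ => ?_⟩
  have hεK : (2 * M₁ + 4 * M₂) * |ε| ≤ 1 := by
    rw [le_div_iff₀ (by positivity)] at hε
    nlinarith [abs_nonneg ε]
  exact strictMono_bijective_and_transfer_lipschitz (fun x => rfl)
    (hasDerivAt_integralAgainst (hC2.of_le one_le_two) hM₁ hφ.continuous)
    (hφ.abs_integralAgainst_le hC2.continuous hM₀) (hφ.abs_integralAgainst_le hC1.continuous hM₁)
    (abs_sub_le_of_abs_deriv_le (hasDerivAt_integralAgainst hC1 hM₂ hφ.continuous)
      (hφ.abs_integralAgainst_le hC0 hM₂))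
    hεK hL hφ.2.1 (hφ.le_one_add hL) hφ.2.2.1
end

section
/- There exist ε₀ > 0 and C ≥ 0, depending only on h, such that for every ε with |ε| ≤ ε₀ and every a > 0 with (1/2)·(a·(1 + C|ε|) + C|ε|) < a, setting λ := (a·(1 + C|ε|) + C|ε|)/(2a) ∈ (0,1), every φ ∈ V_a with ∫₀¹ φ = 1 satisfies T_ε φ ∈ V_{λa}; that is, the self-consistent transfer operator maps the cone V_a strictly inside itself. -/
open MeasureTheory

/-- The self-consistent transfer operator `T_ε φ = P (L_{ε,φ} φ)`. -/
noncomputable def Tsc (h : ℝ → ℝ → ℝ) (ε : ℝ) (φ : ℝ → ℝ) : ℝ → ℝ :=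
  Pop (Lop h ε φ φ)

/-- The cone `V_a` of positive, continuous, 1-periodic functions with
`φ x ≤ e^{a|x−y|} φ y` for all `x, y`. -/
def memV (a : ℝ) (φ : ℝ → ℝ) : Prop :=
  Continuous φ ∧ (∀ x, 0 < φ x) ∧ (∀ x, φ (x+1) = φ x) ∧
  ∀ x y, φ x ≤ Real.exp (a * |x - y|) * φ y

/-!
Write `g = id + ε ∫₀¹ h(·, y) φ(y) dy` for the coupled map and `K₁`, `K₂` for bounds of `∂ₓh`,
`∂ₓ²h` (which exist by periodicity). Since `φ` is a probability density, `g' = 1 + ε ∫ ∂ₓh φ`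
satisfies `g' ≥ 1 - |ε|K₁ ≥ 1/2` and `|g'(u) - g'(v)| ≤ |ε|K₂|u - v|`, so `g'` lies in the cone
`V_{2|ε|K₂}`, while `g` is a degree-one circle lift whose inverse is `(1 - |ε|K₁)⁻¹`-Lipschitz.
Dividing by an element of `V_b` adds `b` to the cone parameter, precomposing with an
`L`-Lipschitz lift multiplies it by `L`, and `P` halves it; so `T_ε φ` lies in
`V_{(a + 2|ε|K₂)/(2(1 - |ε|K₁))} ⊆ V_{λa}`.
-/

open Function Filter

noncomputable def partialFst (F : ℝ × ℝ → ℝ) (p : ℝ × ℝ) : ℝ := fderiv ℝ F p (1, 0)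

lemma ContDiff.partialFst {F : ℝ × ℝ → ℝ} {m n : WithTop ℕ∞} (hF : ContDiff ℝ n F)
    (hmn : m + 1 ≤ n) : ContDiff ℝ m (partialFst F) :=
  (ContinuousLinearMap.apply ℝ ℝ ((1 : ℝ), (0 : ℝ))).contDiff.comp (hF.fderiv_right hmn)

lemma DifferentiableAt.hasDerivAt_partialFst {F : ℝ × ℝ → ℝ} {x y : ℝ}
    (hF : DifferentiableAt ℝ F (x, y)) : HasDerivAt (fun t => F (t, y)) (partialFst F (x, y)) x :=
  hF.hasFDerivAt.comp_hasDerivAt x ((hasDerivAt_id x).prodMk (hasDerivAt_const x y))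

lemma Function.Periodic.partialFst {F : ℝ × ℝ → ℝ} {v : ℝ × ℝ} (hF : Periodic F v) :
    Periodic (_root_.partialFst F) v := fun p => by
  simp only [_root_.partialFst]
  rw [← fderiv_comp_add_right, hF.funext]

lemma abs_sub_le_of_abs_partialFst_le {F : ℝ × ℝ → ℝ} {K : ℝ} (hF : Differentiable ℝ F)
    (hK : ∀ p, |partialFst F p| ≤ K) (u v y : ℝ) : |F (u, y) - F (v, y)| ≤ K * |u - v| := by
  simpa only [Real.norm_eq_abs] using convex_univ.norm_image_sub_le_of_norm_hasDerivWithin_le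
    (fun t _ => (hF (t, y)).hasDerivAt_partialFst.hasDerivWithinAt) (fun t _ => hK (t, y))
    (Set.mem_univ v) (Set.mem_univ u)

lemma Continuous.exists_abs_le_of_periodic {F : ℝ × ℝ → ℝ} (hF : Continuous F)
    (h₁ : Periodic F (1, 0)) (h₂ : Periodic F (0, 1)) : ∃ M, ∀ p, |F p| ≤ M := by
  obtain ⟨M, hM⟩ := (isCompact_Icc.prod isCompact_Icc).exists_bound_of_continuousOn
    (s := Set.Icc (0 : ℝ) 1 ×ˢ Set.Icc (0 : ℝ) 1) hF.continuousOn
  refine ⟨M, fun p => ?_⟩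
  have hp : (Int.fract p.1, Int.fract p.2) = p - ⌊p.1⌋ • (1, 0) - ⌊p.2⌋ • (0, 1) := by
    ext <;> simp [← Int.self_sub_floor]
  calc |F p| = ‖F (Int.fract p.1, Int.fract p.2)‖ := by
        rw [hp, h₂.sub_zsmul_eq, h₁.sub_zsmul_eq, Real.norm_eq_abs]
    _ ≤ M := hM _ ⟨⟨Int.fract_nonneg _, (Int.fract_lt_one _).le⟩,
        ⟨Int.fract_nonneg _, (Int.fract_lt_one _).le⟩⟩

lemma abs_intervalIntegral_mul_le {k φ : ℝ → ℝ} {M : ℝ} (hφ : IntervalIntegrable φ volume 0 1)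
    (hφ0 : ∀ y, 0 ≤ φ y) (hφ1 : ∫ y in (0 : ℝ)..1, φ y = 1) (hk : ∀ y, |k y| ≤ M) :
    |∫ y in (0 : ℝ)..1, k y * φ y| ≤ M :=
  calc |∫ y in (0 : ℝ)..1, k y * φ y| ≤ ∫ y in (0 : ℝ)..1, M * φ y :=
        intervalIntegral.norm_integral_le_of_norm_le (f := fun y => k y * φ y)
          (g := fun y => M * φ y) zero_le_one
          (ae_of_all _ fun y _ => by
            rw [Real.norm_eq_abs, abs_mul, abs_of_nonneg (hφ0 y)]
            exact mul_le_mul_of_nonneg_right (hk y) (hφ0 y))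
          (hφ.const_mul M)
    _ = M := by rw [intervalIntegral.integral_const_mul, hφ1, mul_one]

noncomputable def integralSnd (F : ℝ × ℝ → ℝ) (φ : ℝ → ℝ) (x : ℝ) : ℝ :=
  ∫ y in (0 : ℝ)..1, F (x, y) * φ y

section IntegralSnd

variable {F : ℝ × ℝ → ℝ} {φ : ℝ → ℝ} {K : ℝ}

lemma hasDerivAt_integralSnd (hF : ContDiff ℝ 1 F) (hK : ∀ p, |partialFst F p| ≤ K)
    (hφ : Continuous φ) (x : ℝ) :
    HasDerivAt (integralSnd F φ) (integralSnd (partialFst F) φ x) x := by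
  have hFx : ∀ x, Continuous fun y => F (x, y) * φ y := fun x =>
    (hF.continuous.comp (Continuous.prodMk_right x)).mul hφ
  have hF'x : Continuous fun y => partialFst F (x, y) * φ y :=
    ((hF.partialFst (m := 0) le_rfl).continuous.comp (Continuous.prodMk_right x)).mul hφ
  exact (intervalIntegral.hasDerivAt_integral_of_dominated_loc_of_deriv_le
    (F := fun x y => F (x, y) * φ y) (F' := fun x y => partialFst F (x, y) * φ y)
    (bound := fun y => K * |φ y|) univ_mem
    (Eventually.of_forall fun x => (hFx x).aestronglyMeasurable)
    ((hFx x).intervalIntegrable 0 1) hF'x.aestronglyMeasurable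
    (ae_of_all _ fun y _ x _ => by
      rw [Real.norm_eq_abs, abs_mul]
      exact mul_le_mul_of_nonneg_right (hK (x, y)) (abs_nonneg _))
    ((continuous_const.mul hφ.abs).intervalIntegrable 0 1)
    (ae_of_all _ fun y _ x _ =>
      ((hF.differentiable one_ne_zero (x, y)).hasDerivAt_partialFst).mul_const (φ y))).2

lemma abs_integralSnd_sub_le (hF : Differentiable ℝ F) (hK : ∀ p, |partialFst F p| ≤ K)
    (hφ : Continuous φ) (hφ0 : ∀ y, 0 ≤ φ y) (hφ1 : ∫ y in (0 : ℝ)..1, φ y = 1) (u v : ℝ) :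
    |integralSnd F φ u - integralSnd F φ v| ≤ K * |u - v| := by
  have hFx : ∀ x, IntervalIntegrable (fun y => F (x, y) * φ y) volume 0 1 := fun x =>
    ((hF.continuous.comp (Continuous.prodMk_right x)).mul hφ).intervalIntegrable 0 1
  rw [integralSnd, integralSnd, ← intervalIntegral.integral_sub (hFx u) (hFx v)]
  simp_rw [← sub_mul]
  exact abs_intervalIntegral_mul_le (hφ.intervalIntegrable 0 1) hφ0 hφ1
    (abs_sub_le_of_abs_partialFst_le hF hK u v)

lemma Function.Periodic.integralSnd (hF : Periodic F (1, 0)) :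
    Periodic (_root_.integralSnd F φ) 1 := fun x => by
  simp only [_root_.integralSnd]
  congr 1 with y
  simpa using congrArg (· * φ y) (hF (x, y))

end IntegralSnd

section InverseOfExpandingMap

variable {f : ℝ → ℝ} {c : ℝ}

lemma differentiable_of_le_deriv (hc : 0 < c) (hf' : ∀ x, c ≤ deriv f x) :
    Differentiable ℝ f := fun x =>
  differentiableAt_of_deriv_ne_zero (hc.trans_le (hf' x)).ne'

lemma bijective_of_le_deriv (hc : 0 < c) (hf' : ∀ x, c ≤ deriv f x) : Bijective f := by
  have hf := differentiable_of_le_deriv hc hf'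
  have hgrowth := mul_sub_le_image_sub_of_le_deriv hf hf'
  refine ⟨(strictMono_of_deriv_pos fun x => hc.trans_le (hf' x)).injective,
    hf.continuous.surjective ?_ ?_⟩
  · refine tendsto_atTop_mono' _ ?_
      (tendsto_atTop_add_const_left _ (f 0) (tendsto_id.const_mul_atTop hc))
    filter_upwards [eventually_ge_atTop 0] with x hx
    simp only [id]
    linarith [hgrowth hx]
  · refine tendsto_atBot_mono' _ ?_
      (tendsto_atBot_add_const_left _ (f 0) (tendsto_id.const_mul_atBot hc))
    filter_upwards [eventually_le_atBot 0] with x hx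
    simp only [id]
    linarith [hgrowth hx]

lemma antilipschitzWith_of_le_deriv (hc : 0 < c) (hf' : ∀ x, c ≤ deriv f x) :
    AntilipschitzWith (Real.toNNReal c⁻¹) f := by
  have hgrowth := mul_sub_le_image_sub_of_le_deriv (differentiable_of_le_deriv hc hf') hf'
  refine AntilipschitzWith.of_le_mul_dist fun x y => ?_
  rw [Real.coe_toNNReal _ (inv_nonneg.2 hc.le), Real.dist_eq, Real.dist_eq,
    le_inv_mul_iff₀ hc]
  rcases le_total x y with hxy | hxy
  · rw [abs_sub_comm x, abs_sub_comm (f x), abs_of_nonneg (sub_nonneg.2 hxy)]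
    exact (hgrowth hxy).trans (le_abs_self _)
  · rw [abs_of_nonneg (sub_nonneg.2 hxy)]
    exact (hgrowth hxy).trans (le_abs_self _)

lemma lipschitzWith_invFun_of_le_deriv (hc : 0 < c) (hf' : ∀ x, c ≤ deriv f x) :
    LipschitzWith (Real.toNNReal c⁻¹) (invFun f) :=
  (antilipschitzWith_of_le_deriv hc hf').to_rightInverse
    (rightInverse_invFun (bijective_of_le_deriv hc hf').surjective)

lemma invFun_add_one (hf : Bijective f) (h1 : ∀ x, f (x + 1) = f x + 1) (x : ℝ) :
    invFun f (x + 1) = invFun f x + 1 :=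
  hf.injective <| by
    rw [h1, rightInverse_invFun hf.surjective, rightInverse_invFun hf.surjective]

end InverseOfExpandingMap

section Cone

variable {a b : ℝ} {φ w : ℝ → ℝ}

lemma memV_mono (hab : a ≤ b) (hφ : memV a φ) : memV b φ :=
  ⟨hφ.1, hφ.2.1, hφ.2.2.1, fun x y => (hφ.2.2.2 x y).trans <| by
    gcongr
    exact (hφ.2.1 y).le⟩

lemma memV_div (hφ : memV a φ) (hw : memV b w) : memV (a + b) (φ / w) := by
  obtain ⟨hφc, hφpos, hφper, hφcone⟩ := hφ
  obtain ⟨hwc, hwpos, hwper, hwcone⟩ := hw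
  refine ⟨hφc.div hwc fun x => (hwpos x).ne', fun x => div_pos (hφpos x) (hwpos x),
    fun x => by simp only [Pi.div_apply, hφper, hwper], fun x y => ?_⟩
  rw [Pi.div_apply, Pi.div_apply, div_le_iff₀ (hwpos x)]
  calc φ x ≤ Real.exp (a * |x - y|) * (φ y / w y) * w y := by
        rw [mul_assoc, div_mul_cancel₀ _ (hwpos y).ne']
        exact hφcone x y
    _ ≤ Real.exp (a * |x - y|) * (φ y / w y) * (Real.exp (b * |x - y|) * w x) := by
        gcongr
        · exact mul_nonneg (Real.exp_pos _).le (div_pos (hφpos y) (hwpos y)).le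
        · rw [abs_sub_comm]
          exact hwcone y x
    _ = Real.exp ((a + b) * |x - y|) * (φ y / w y) * w x := by
        rw [add_mul, Real.exp_add]
        ring

lemma memV_comp {s : ℝ → ℝ} {K : NNReal} (ha : 0 ≤ a) (hφ : memV a φ) (hs : LipschitzWith K s)
    (hs1 : ∀ x, s (x + 1) = s x + 1) : memV (a * K) (φ ∘ s) := by
  obtain ⟨hφc, hφpos, hφper, hφcone⟩ := hφ
  refine ⟨hφc.comp hs.continuous, fun x => hφpos (s x),
    fun x => by simp only [comp_apply, hs1, hφper], fun x y => (hφcone (s x) (s y)).trans ?_⟩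
  have hdist := hs.dist_le_mul x y
  rw [Real.dist_eq, Real.dist_eq] at hdist
  rw [comp_apply, mul_assoc]
  gcongr
  exact (hφpos (s y)).le

lemma memV_of_abs_sub_le {m L : ℝ} (hm : 0 < m) (hwc : Continuous w) (hwm : ∀ x, m ≤ w x)
    (hw1 : ∀ x, w (x + 1) = w x) (hL : ∀ x y, |w x - w y| ≤ L * |x - y|) :
    memV (L / m) w := by
  refine ⟨hwc, fun x => hm.trans_le (hwm x), hw1, fun x y => ?_⟩
  have hL0 : 0 ≤ L * |x - y| := (abs_nonneg _).trans (hL x y)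
  calc w x ≤ w y + L * |x - y| := by linarith [le_abs_self (w x - w y), hL x y]
    _ ≤ w y + L / m * |x - y| * w y := by
        have : L * |x - y| = L / m * |x - y| * m := by field_simp
        rw [this]
        gcongr
        · rw [div_mul_eq_mul_div]
          exact div_nonneg hL0 hm.le
        · exact hwm y
    _ = (L / m * |x - y| + 1) * w y := by ring
    _ ≤ Real.exp (L / m * |x - y|) * w y := by
        gcongr
        · exact (hm.trans_le (hwm y)).le
        · exact Real.add_one_le_exp _

lemma memV_Pop {ψ : ℝ → ℝ} (hψ : memV (2 * b) ψ) : memV b (Pop ψ) := by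
  obtain ⟨hψc, hψpos, hψper, hψcone⟩ := hψ
  have halve : ∀ x y : ℝ, 2 * b * |x / 2 - y / 2| = b * |x - y| := fun x y => by
    rw [← sub_div, abs_div, abs_two]
    ring
  refine ⟨by unfold Pop; fun_prop, fun x => ?_, fun x => ?_, fun x y => ?_⟩
  · simp only [Pop]
    linarith [hψpos (x / 2), hψpos ((x + 1) / 2)]
  · simp only [Pop, show (x + 1 + 1) / 2 = x / 2 + 1 by ring, hψper]
    ring
  · have k1 := hψcone (x / 2) (y / 2)
    have k2 := hψcone ((x + 1) / 2) ((y + 1) / 2)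
    rw [halve] at k1
    rw [halve, add_sub_add_right_eq_sub] at k2
    simp only [Pop]
    linarith

end Cone

lemma periodic_uncurry_fst {h : ℝ → ℝ → ℝ} (hper : ∀ x y, h (x + 1) y = h x y) :
    Periodic (uncurry h) (1, 0) := fun ⟨x, y⟩ => by
  simp only [Prod.mk_add_mk, add_zero, uncurry_apply_pair, hper]

lemma periodic_uncurry_snd {h : ℝ → ℝ → ℝ} (hper : ∀ x y, h x (y + 1) = h x y) :
    Periodic (uncurry h) (0, 1) := fun ⟨x, y⟩ => by
  simp only [Prod.mk_add_mk, add_zero, uncurry_apply_pair, hper]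

section CoupledMap

variable {h : ℝ → ℝ → ℝ} {ε K₁ K₂ : ℝ} {φ : ℝ → ℝ}

lemma gmap_add_one (hper : ∀ x y, h (x + 1) y = h x y) (x : ℝ) :
    gmap h ε φ (x + 1) = gmap h ε φ x + 1 := by
  simp only [gmap, hper]
  ring

lemma hasDerivAt_gmap (hh : ContDiff ℝ 1 (uncurry h))
    (hK₁ : ∀ p, |partialFst (uncurry h) p| ≤ K₁) (hφ : Continuous φ) (x : ℝ) :
    HasDerivAt (gmap h ε φ) (1 + ε * integralSnd (partialFst (uncurry h)) φ x) x :=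
  (hasDerivAt_id x).add ((hasDerivAt_integralSnd hh hK₁ hφ x).const_mul ε)

lemma one_sub_le_deriv_gmap (hh : ContDiff ℝ 1 (uncurry h))
    (hK₁ : ∀ p, |partialFst (uncurry h) p| ≤ K₁) (hφ : Continuous φ) (hφ0 : ∀ y, 0 ≤ φ y)
    (hφ1 : ∫ y in (0 : ℝ)..1, φ y = 1) (x : ℝ) :
    1 - |ε| * K₁ ≤ deriv (gmap h ε φ) x := by
  have hI : |integralSnd (partialFst (uncurry h)) φ x| ≤ K₁ :=
    abs_intervalIntegral_mul_le (hφ.intervalIntegrable 0 1) hφ0 hφ1 fun y => hK₁ (x, y)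
  rw [(hasDerivAt_gmap hh hK₁ hφ x).deriv]
  have := neg_abs_le (ε * integralSnd (partialFst (uncurry h)) φ x)
  rw [abs_mul] at this
  nlinarith [abs_nonneg ε]

lemma memV_deriv_gmap (hh : ContDiff ℝ 2 (uncurry h)) (hper : ∀ x y, h (x + 1) y = h x y)
    (hK₁ : ∀ p, |partialFst (uncurry h) p| ≤ K₁)
    (hK₂ : ∀ p, |partialFst (partialFst (uncurry h)) p| ≤ K₂) (hε : |ε| * K₁ ≤ 1 / 2)
    (hφ : Continuous φ) (hφ0 : ∀ y, 0 ≤ φ y) (hφ1 : ∫ y in (0 : ℝ)..1, φ y = 1) :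
    memV (2 * (|ε| * K₂)) (deriv (gmap h ε φ)) := by
  have hh1 : ContDiff ℝ 1 (uncurry h) := hh.of_le (by norm_num)
  have hh' : ContDiff ℝ 1 (partialFst (uncurry h)) := hh.partialFst (by norm_num)
  have hderiv : deriv (gmap h ε φ) = fun x => 1 + ε * integralSnd (partialFst (uncurry h)) φ x :=
    funext fun x => (hasDerivAt_gmap hh1 hK₁ hφ x).deriv
  have hper' : Periodic (partialFst (uncurry h)) (1, 0) := (periodic_uncurry_fst hper).partialFst
  rw [show 2 * (|ε| * K₂) = |ε| * K₂ / (1 / 2) by ring]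
  refine memV_of_abs_sub_le one_half_pos ?_ (fun x => by
    linarith [one_sub_le_deriv_gmap (ε := ε) hh1 hK₁ hφ hφ0 hφ1 x]) ?_ ?_
  · rw [hderiv]
    exact continuous_const.add (continuous_const.mul
      (continuous_iff_continuousAt.2 fun x => (hasDerivAt_integralSnd hh' hK₂ hφ x).continuousAt))
  · intro x
    simp only [hderiv, hper'.integralSnd x]
  · intro u v
    rw [hderiv, add_sub_add_left_eq_sub, ← mul_sub, abs_mul, mul_assoc]
    exact mul_le_mul_of_nonneg_left
      (abs_integralSnd_sub_le (hh'.differentiable one_ne_zero) hK₂ hφ hφ0 hφ1 u v)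
      (abs_nonneg ε)

lemma memV_Lop {a : ℝ} (hh : ContDiff ℝ 2 (uncurry h)) (hper : ∀ x y, h (x + 1) y = h x y)
    (hK₁ : ∀ p, |partialFst (uncurry h) p| ≤ K₁)
    (hK₂ : ∀ p, |partialFst (partialFst (uncurry h)) p| ≤ K₂) (hε : |ε| * K₁ ≤ 1 / 2)
    (ha : 0 ≤ a) (hφ : memV a φ) (hφ1 : ∫ y in (0 : ℝ)..1, φ y = 1) :
    memV ((a + 2 * (|ε| * K₂)) * (1 - |ε| * K₁)⁻¹) (Lop h ε φ φ) := by
  have hφ0 : ∀ y, 0 ≤ φ y := fun y => (hφ.2.1 y).le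
  have hc : 0 < 1 - |ε| * K₁ := by linarith
  have hg' := one_sub_le_deriv_gmap (hh.of_le (by norm_num)) hK₁ hφ.1 hφ0 hφ1 (ε := ε)
  have hK₂0 : 0 ≤ K₂ := (abs_nonneg _).trans (hK₂ 0)
  have := memV_comp (by positivity)
    (memV_div hφ (memV_deriv_gmap hh hper hK₁ hK₂ hε hφ.1 hφ0 hφ1))
    (lipschitzWith_invFun_of_le_deriv hc hg')
    (invFun_add_one (bijective_of_le_deriv hc hg') (gmap_add_one hper))
  rwa [Real.coe_toNNReal _ (inv_nonneg.2 hc.le)] at this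

end CoupledMap

/-- For small `ε` and suitable `a`, the self-consistent transfer operator maps the cone
`V_a` strictly inside itself: `T_ε φ ∈ V_{λa}` with `λ = (a(1 + C|ε|) + C|ε|)/(2a) < 1`. -/
theorem stmt10 (h : ℝ → ℝ → ℝ) (hC2 : ContDiff ℝ 2 (Function.uncurry h))
    (hper : periodicH h) :
    ∃ ε₀ > (0:ℝ), ∃ C ≥ (0:ℝ), ∀ ε : ℝ, |ε| ≤ ε₀ → ∀ a : ℝ, 0 < a →
      (1/2) * (a * (1 + C * |ε|) + C * |ε|) < a →
      ∀ lam : ℝ, lam = (a * (1 + C * |ε|) + C * |ε|) / (2 * a) →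
        (0 < lam ∧ lam < 1) ∧
        ∀ φ : ℝ → ℝ, memV a φ → (∫ x in (0:ℝ)..1, φ x) = 1 →
          memV (lam * a) (Tsc h ε φ) := by
  obtain ⟨hpx, hpy⟩ := hper
  have hF₁ := periodic_uncurry_fst hpx
  have hF₂ := periodic_uncurry_snd hpy
  have hh' : ContDiff ℝ 1 (partialFst (uncurry h)) := hC2.partialFst (by norm_num)
  obtain ⟨K₁, hK₁⟩ := hh'.continuous.exists_abs_le_of_periodic hF₁.partialFst hF₂.partialFst
  obtain ⟨K₂, hK₂⟩ := (hh'.partialFst (m := 0) le_rfl).continuous.exists_abs_le_of_periodic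
    hF₁.partialFst.partialFst hF₂.partialFst.partialFst
  have hK₁0 : 0 ≤ K₁ := (abs_nonneg _).trans (hK₁ 0)
  have hK₂0 : 0 ≤ K₂ := (abs_nonneg _).trans (hK₂ 0)
  -- `ε₀` forces `|ε|K₁ ≤ 1/2`, and with `C = 2K₁ + 4K₂` the exponent
  -- `(a + 2|ε|K₂)/(1 - |ε|K₁)` of `memV_Lop` is at most `2λa`.
  refine ⟨1 / (2 * K₁ + 1), by positivity, 2 * K₁ + 4 * K₂, by positivity,
    fun ε hε a ha hsmall lam hlam => ?_⟩
  have hεK₁ : |ε| * K₁ ≤ 1 / 2 := by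
    rw [le_div_iff₀ (by positivity)] at hε
    nlinarith [abs_nonneg ε]
  have h2lam : 2 * (lam * a) = a * (1 + (2 * K₁ + 4 * K₂) * |ε|) + (2 * K₁ + 4 * K₂) * |ε| := by
    rw [hlam]
    field_simp
  refine ⟨⟨by rw [hlam]; positivity, by rw [hlam, div_lt_one (by positivity)]; linarith⟩,
    fun φ hφ hφ1 => memV_Pop (memV_mono ?_ (memV_Lop hC2 hpx hK₁ hK₂ hεK₁ ha.le hφ hφ1))⟩
  rw [h2lam, ← div_eq_mul_inv, div_le_iff₀ (by linarith)]
  nlinarith [mul_nonneg (mul_nonneg ha.le hK₁0) (abs_nonneg ε), mul_nonneg hK₂0 (abs_nonneg ε),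
    mul_nonneg (mul_nonneg ha.le hK₂0) (abs_nonneg ε), mul_nonneg hK₁0 (abs_nonneg ε)]
end

section
/- Let f : 𝕋 → 𝕋 and h : 𝕋×𝕋 → ℝ be continuous. If (μ_n) is a sequence of Borel probability measures on 𝕋 converging weakly to a Borel probability measure μ, then (f_{μ_n})_* μ_n converges weakly to (f_μ)_* μ. In particular, the self-consistent transfer operator T is continuous on the space of Borel probability measures on 𝕋 equipped with the weak topology. -/
/-!
The averaged interaction `x ↦ ∫ h(x, y) dν(y)` is equicontinuous in `x`, uniformly over all
probability measures `ν`, because `x ↦ h(x, ·)` is continuous into `C(𝕋, ℝ)`. On the compact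
circle, equicontinuity upgrades the pointwise convergence given by `μₙ → μ` to uniform convergence,
so `f_{μₙ} → f_μ` uniformly and `ψ ∘ f_{μₙ} → ψ ∘ f_μ` uniformly for every continuous `ψ`. Since the
`μₙ` have mass one, `∫ ψ ∘ f_{μₙ} dμₙ` is then uniformly close to `∫ ψ ∘ f_μ dμₙ`, which tends to
`∫ ψ ∘ f_μ dμ`.
-/

open MeasureTheory

/-- Given `f : 𝕋 → 𝕋`, `h : 𝕋×𝕋 → ℝ` and a measure `μ` on `𝕋`, the mean-field coupled map
`f_μ(x) = f(x) + (∫ h(x,y) dμ(y) mod 1)`. -/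
noncomputable def fMu (f : UnitAddCircle → UnitAddCircle) (h : UnitAddCircle → UnitAddCircle → ℝ)
    (μ : Measure UnitAddCircle) : UnitAddCircle → UnitAddCircle :=
  fun x => f x + (↑(∫ y, h x y ∂μ) : UnitAddCircle)

open Filter Topology Function

section ProbabilityIntegral

variable {α E : Type*} [MeasurableSpace α] [NormedAddCommGroup E] [NormedSpace ℝ E]

theorem dist_integral_le_of_forall_dist_le {ν : Measure α} [IsProbabilityMeasure ν]
    {g₁ g₂ : α → E} (hg₁ : Integrable g₁ ν) (hg₂ : Integrable g₂ ν) {C : ℝ}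
    (hC : ∀ x, dist (g₁ x) (g₂ x) ≤ C) : dist (∫ x, g₁ x ∂ν) (∫ x, g₂ x ∂ν) ≤ C := by
  rw [dist_eq_norm, ← integral_sub hg₁ hg₂]
  simpa using norm_integral_le_of_norm_le_const (μ := ν) (C := C)
    (Eventually.of_forall fun x => (dist_eq_norm (g₁ x) (g₂ x)).symm.trans_le (hC x))

theorem tendsto_integral_of_tendstoUniformly {ι : Type*} {l : Filter ι} {ν : ι → Measure α}
    [∀ i, IsProbabilityMeasure (ν i)] {μ : Measure α} {F : ι → α → E} {g : α → E}
    (hF : ∀ i, Integrable (F i) (ν i)) (hg : ∀ i, Integrable g (ν i))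
    (hFg : TendstoUniformly F g l)
    (hconv : Tendsto (fun i => ∫ x, g x ∂ν i) l (𝓝 (∫ x, g x ∂μ))) :
    Tendsto (fun i => ∫ x, F i x ∂ν i) l (𝓝 (∫ x, g x ∂μ)) := by
  refine hconv.congr_dist (Metric.tendsto_nhds.mpr fun ε hε => ?_)
  filter_upwards [Metric.tendstoUniformly_iff.mp hFg (ε / 2) (half_pos hε)] with i hi
  have hle := dist_integral_le_of_forall_dist_le (hg i) (hF i) fun x => (hi x).le
  rw [Real.dist_0_eq_abs, abs_of_nonneg dist_nonneg]
  linarith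

end ProbabilityIntegral

theorem Continuous.integrable_of_compactSpace {X E : Type*} [TopologicalSpace X] [CompactSpace X]
    [MeasurableSpace X] [OpensMeasurableSpace X] [NormedAddCommGroup E] {μ : Measure X}
    [IsFiniteMeasure μ] {g : X → E} (hg : Continuous g) : Integrable g μ :=
  hg.integrable_of_hasCompactSupport (.of_compactSpace g)

section ParametricIntegral

variable {X Y : Type*} [TopologicalSpace X] [TopologicalSpace Y] [CompactSpace Y]
  [MeasurableSpace Y] [OpensMeasurableSpace Y] {h : X → Y → ℝ}

theorem equicontinuous_integral_of_continuous_uncurry (hh : Continuous (uncurry h))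
    {ι : Type*} (ν : ι → Measure Y) [∀ i, IsProbabilityMeasure (ν i)] :
    Equicontinuous fun i x => ∫ y, h x y ∂ν i := by
  let Φ : C(X, C(Y, ℝ)) := ContinuousMap.curry ⟨uncurry h, hh⟩
  intro x₀
  refine Metric.equicontinuousAt_of_continuity_modulus (fun x => dist (Φ x₀) (Φ x))
    ?_ _ (Eventually.of_forall fun x i => ?_)
  · simpa using (tendsto_const_nhds (x := Φ x₀)).dist (Φ.continuous.tendsto x₀)
  · exact dist_integral_le_of_forall_dist_le (hh.uncurry_left x₀).integrable_of_compactSpace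
      (hh.uncurry_left x).integrable_of_compactSpace fun y => ContinuousMap.dist_apply_le_dist (f := Φ x₀) (g := Φ x) y

theorem tendstoUniformly_integral_of_continuous_uncurry [CompactSpace X]
    (hh : Continuous (uncurry h)) {ι : Type*} {l : Filter ι} {ν : ι → Measure Y}
    [∀ i, IsProbabilityMeasure (ν i)] {μ : Measure Y}
    (hconv : ∀ ψ : Y → ℝ, Continuous ψ → Tendsto (fun i => ∫ y, ψ y ∂ν i) l (𝓝 (∫ y, ψ y ∂μ))) :
    TendstoUniformly (fun i x => ∫ y, h x y ∂ν i) (fun x => ∫ y, h x y ∂μ) l :=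
  UniformFun.tendsto_iff_tendstoUniformly.mp <|
    ((equicontinuous_integral_of_continuous_uncurry hh ν).tendsto_uniformFun_iff_pi l _).mpr <|
      tendsto_pi_nhds.mpr fun x => hconv _ (hh.uncurry_left x)

end ParametricIntegral

section CoupledMap

variable {f : UnitAddCircle → UnitAddCircle} {h : UnitAddCircle → UnitAddCircle → ℝ}

theorem continuous_fMu (hf : Continuous f) (hh : Continuous (uncurry h))
    (ν : Measure UnitAddCircle) [IsFiniteMeasure ν] : Continuous (fMu f h ν) := by
  have hH : Continuous fun x => ∫ y, h x y ∂ν := by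
    simpa using continuous_parametric_integral_of_continuous (μ := ν) hh isCompact_univ
  exact hf.add ((AddCircle.continuous_mk' 1).comp hH)

theorem tendstoUniformly_fMu {ι : Type*} {l : Filter ι} {ν : ι → Measure UnitAddCircle}
    {μ : Measure UnitAddCircle}
    (hH : TendstoUniformly (fun i x => ∫ y, h x y ∂ν i) (fun x => ∫ y, h x y ∂μ) l) :
    TendstoUniformly (fun i => fMu f h (ν i)) (fMu f h μ) l := by
  have hcoe : UniformContinuous ((↑) : ℝ → UnitAddCircle) :=
    uniformContinuous_addMonoidHom_of_continuous (AddCircle.continuous_mk' (1 : ℝ))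
  have hconst : TendstoUniformly (fun _ : ι => f) f l :=
    fun _ hu => Eventually.of_forall fun _ _ => refl_mem_uniformity hu
  exact hconst.add (hcoe.comp_tendstoUniformly hH)

end CoupledMap

/-- The self-consistent transfer operator `T μ = (f_μ)_* μ` is continuous with respect to the
weak topology on Borel probability measures: if `μₙ → μ` weakly, then
`(f_{μₙ})_* μₙ → (f_μ)_* μ` weakly. -/
theorem stmt19 (f : UnitAddCircle → UnitAddCircle) (hf : Continuous f)
    (h : UnitAddCircle → UnitAddCircle → ℝ) (hh : Continuous (Function.uncurry h))
    (μ : Measure UnitAddCircle) [IsProbabilityMeasure μ]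
    (μs : ℕ → Measure UnitAddCircle) (hμs : ∀ n, IsProbabilityMeasure (μs n))
    (hconv : ∀ ψ : UnitAddCircle → ℝ, Continuous ψ →
      Filter.Tendsto (fun n : ℕ => ∫ x, ψ x ∂(μs n)) Filter.atTop (nhds (∫ x, ψ x ∂μ))) :
    ∀ ψ : UnitAddCircle → ℝ, Continuous ψ →
      Filter.Tendsto (fun n : ℕ => ∫ x, ψ x ∂((μs n).map (fMu f h (μs n))))
        Filter.atTop (nhds (∫ x, ψ x ∂(μ.map (fMu f h μ)))) := by
  intro ψ hψ
  have hmap : ∀ (ν : Measure UnitAddCircle) [IsProbabilityMeasure ν],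
      ∫ x, ψ x ∂(ν.map (fMu f h ν)) = ∫ x, ψ (fMu f h ν x) ∂ν := fun ν _ =>
    integral_map (continuous_fMu hf hh ν).aemeasurable hψ.aestronglyMeasurable
  simp only [hmap]
  have hψf : TendstoUniformly (fun n => ψ ∘ fMu f h (μs n)) (ψ ∘ fMu f h μ) atTop :=
    (CompactSpace.uniformContinuous_of_continuous hψ).comp_tendstoUniformly
      (tendstoUniformly_fMu (tendstoUniformly_integral_of_continuous_uncurry hh hconv))
  exact tendsto_integral_of_tendstoUniformly
    (fun n => (hψ.comp (continuous_fMu hf hh (μs n))).integrable_of_compactSpace)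
    (fun n => (hψ.comp (continuous_fMu hf hh μ)).integrable_of_compactSpace) hψf
    (hconv _ (hψ.comp (continuous_fMu hf hh μ)))
end
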